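/- Let Λ be a finite box, π the product Bernoulli(p) measure on {0,1}^Λ, and let 0 = t_0 < t_1 < ⋯ < t_n < t_{n+1} = t. For i = 0,…,n let 𝓛^{(i)} be the generator of the East-like process on Λ with (possibly non-ergodic) boundary condition η_{t_i}, each self-adjoint in L²(Λ, π), and suppose λ > 0 is such that whenever η_{t_i}(y) = 0 (for a fixed boundary vertex y ∈ ∂_E Λ) the spectral gap of 𝓛^{(i)} is at least λ. Then for every f : {0,1}^Λ → ℝ with π(f) = 0 and ‖f‖_∞ ≤ 1, ‖e^{t_1 𝓛^{(0)}} e^{(t_2−t_1) 𝓛^{(1)}} ⋯ e^{(t−t_n) 𝓛^{(n)}} f‖_{L²(π)} ≤ exp[−λ Σ_{i=0}^n (t_{i+1} − t_i) 1(η_{t_i}(y) = 0)]. -/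

import Mathlib

open MeasureTheory ProbabilityTheory Set

noncomputable section

/-- Sites of the lattice `ℤ^d`. -/
abbrev Site (d : ℕ) := Fin d → ℤ

/-- Spin configurations: `true` = particle (spin 1), `false` = vacancy (spin 0). -/
abbrev Config (d : ℕ) := Site d → Bool

/-- The canonical basis vector `e i` of `ℤ^d`. -/
def basisVec (d : ℕ) (i : Fin d) : Site d := fun j => if j = i then 1 else 0

/-- The East constraint at `x`: some site `x - e`, with `e` a canonical basis
vector, carries a vacancy. -/
def constraintAt {d : ℕ} (x : Site d) (η : Config d) : Prop :=
  ∃ i : Fin d, η (x - basisVec d i) = false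

/-- The East boundary `∂_E X` of a set of sites. -/
def eastBdry {d : ℕ} (X : Set (Site d)) : Set (Site d) :=
  {y | y ∉ X ∧ ∃ i : Fin d, y + basisVec d i ∈ X}

/-- Sample space of the graphical construction: at each site, a sequence of clock
ring times together with a sequence of coin tosses. -/
abbrev GSpace (d : ℕ) := Site d → (ℕ → ℝ) × (ℕ → Bool)

/-- The `n`-th clock ring time `t_{x,n}` at site `x`. -/
def ringT {d : ℕ} (θ : GSpace d) (x : Site d) (n : ℕ) : ℝ := (θ x).1 n

/-- The `n`-th coin toss `s_{x,n}` at site `x`. -/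
def coinT {d : ℕ} (θ : GSpace d) (x : Site d) (n : ℕ) : Bool := (θ x).2 n

/-- Interarrival times of the clock rings at a site. -/
def gapT {d : ℕ} (θ : GSpace d) (x : Site d) : ℕ → ℝ
  | 0 => ringT θ x 0
  | n + 1 => ringT θ x (n + 1) - ringT θ x n

/-- The exponential law of rate `1` on `ℝ`. -/
def expLaw : Measure ℝ :=
  MeasureTheory.volume.withDensity fun s =>
    ENNReal.ofReal (if 0 ≤ s then Real.exp (-s) else 0)

/-- The Bernoulli(`p`) law on `ℝ` (mass `p` at `1`, mass `1-p` at `0`). -/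
def bernoulliReal (p : ℝ) : Measure ℝ :=
  ENNReal.ofReal p • Measure.dirac 1 + ENNReal.ofReal (1 - p) • Measure.dirac 0

/-- The Bernoulli(`p`) law on `Bool` (probability `p` of a particle). -/
def bernoulliBool (p : ℝ) : Measure Bool :=
  ENNReal.ofReal p • Measure.dirac true + ENNReal.ofReal (1 - p) • Measure.dirac false

/-- The elementary random variables of the graphical construction: interarrival
times of the Poisson clocks (left) and coin tosses (right, coded as `0`/`1`). -/
def elemVar (d : ℕ) : (Site d × ℕ) ⊕ (Site d × ℕ) → GSpace d → ℝ
  | .inl (x, n) => fun θ => gapT θ x n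
  | .inr (x, n) => fun θ => if coinT θ x n then 1 else 0

/-- The East-like process with parameter `p` on the region `R ⊆ ℤ^d` (the spins
outside `R` are frozen, playing the role of a boundary condition; `R = univ`
gives the process on all of `ℤ^d`), presented through its graphical
construction: `μ` is the law of the clock rings and coin tosses (rate-one
Poisson processes and i.i.d. Bernoulli(`p`) variables, all independent), and
`path η θ t` is the configuration at time `t` of the pathwise solution started
from `η`, driven by the noise `θ`: spins in `R` are resampled by the coin
tosses exactly at the legal rings (rings at which the East constraint holds). -/
structure EastProcess (d : ℕ) (p : ℝ) (R : Set (Site d)) : Type where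
  μ : Measure (GSpace d)
  isProb : IsProbabilityMeasure μ
  indep : iIndepFun (elemVar d) μ
  gap_law : ∀ x n, μ.map (fun θ => gapT θ x n) = expLaw
  coin_law : ∀ x n, μ.map (elemVar d (.inr (x, n))) = bernoulliReal p
  path : Config d → GSpace d → ℝ → Config d
  path_meas : ∀ η t, Measurable fun θ => path η θ t
  path_jointly_meas : ∀ η x, Measurable fun q : GSpace d × ℝ => path η q.1 q.2 x
  path_props : ∀ η : Config d, ∀ᵐ θ ∂μ,
    (∀ t : ℝ, t ≤ 0 → path η θ t = η) ∧
    (∀ y ∉ R, ∀ t : ℝ, path η θ t y = η y) ∧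
    (∀ x ∈ R, ∀ n : ℕ, 0 < ringT θ x n →
      constraintAt x (path η θ (ringT θ x n)) →
        path η θ (ringT θ x n) x = coinT θ x n) ∧
    (∀ x ∈ R, ∀ s t : ℝ, 0 ≤ s → s ≤ t →
      (∀ n : ℕ, ringT θ x n ∈ Set.Ioc s t →
        ¬ constraintAt x (path η θ (ringT θ x n))) →
        path η θ t x = path η θ s x)

open Classical in
/-- The information (rings and coin tosses) at the sites of `Λ` up to time `t`. -/
def infoUpTo (d : ℕ) (Λ : Set (Site d)) (t : ℝ) (θ : GSpace d) :
    Site d → ℕ → (ℝ × Bool) ⊕ Unit := fun x n =>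
  if x ∈ Λ ∧ ringT θ x n ≤ t then Sum.inl (ringT θ x n, coinT θ x n) else Sum.inr ()

/-- The σ-algebra `ℱ_{Λ,t}` generated by the clock rings and coin tosses at the
vertices of `Λ` up to time `t`. -/
def sigmaUpTo (d : ℕ) (Λ : Set (Site d)) (t : ℝ) : MeasurableSpace (GSpace d) :=
  MeasurableSpace.comap (infoUpTo d Λ t) inferInstance

/-- `𝒯_t(x)`: total time spent at `0` by the spin at `x` up to time `t`, for the
process started from `ζ` and driven by the noise `θ`. -/
def vacancyTime {d : ℕ} {p : ℝ} {R : Set (Site d)} (G : EastProcess d p R)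
    (ζ : Config d) (x : Site d) (t : ℝ) (θ : GSpace d) : ℝ :=
  ∫ s in (0:ℝ)..t, (if G.path ζ θ s x = false then (1:ℝ) else 0)

/-- The quadrant `ℤ^d_+`. -/
def quadrant (d : ℕ) : Set (Site d) := {y | ∀ i, 0 ≤ y i}

/-- The box `[1,L]^d` as a set of sites. -/
def boxSet (d L : ℕ) : Set (Site d) := {y | ∀ i, 1 ≤ y i ∧ y i ≤ (L : ℤ)}

/-- The box `[1,L]^d` as a finite set of sites. -/
def boxFinset (d L : ℕ) : Finset (Site d) :=
  Fintype.piFinset fun _ : Fin d => Finset.Icc (1 : ℤ) (L : ℤ)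

open Classical in
/-- The configuration equal to `η` on `R` and to the boundary condition `σb`
outside `R`. -/
def withBC {d : ℕ} (R : Set (Site d)) (σb η : Config d) : Config d :=
  fun y => if y ∈ R then η y else σb y

/-- The minimal boundary condition for `ℤ^d_+`: a single vacancy at `-e`. -/
def minBC (d : ℕ) (e : Fin d) : Config d := fun y => !(decide (y = -(basisVec d e)))

end

noncomputable section

/-- Spin configurations on a finite set `Λ` of sites. -/
abbrev FConfig {d : ℕ} (Λ : Finset (Site d)) := ↥Λ → Bool

open Classical in
/-- The configuration `σ·η`, equal to `η` on `Λ` and to the boundary condition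
`σb` outside. -/
def fullConf {d : ℕ} (Λ : Finset (Site d)) (σb : Config d) (η : FConfig Λ) : Config d :=
  fun y => if h : y ∈ Λ then η ⟨y, h⟩ else σb y

/-- The finite-volume East constraint `c_x^{Λ,σ}`. -/
def fconstraint {d : ℕ} (Λ : Finset (Site d)) (σb : Config d) (x : ↥Λ)
    (η : FConfig Λ) : Prop :=
  ∃ i : Fin d, fullConf Λ σb η ((x : Site d) - basisVec d i) = false

open Classical in
/-- The generator `𝓛^σ_Λ` of the East-like process on `Λ` with boundary
condition `σb`:
`𝓛f(η) = Σ_{x ∈ Λ} c_x^{Λ,σ}(η) [π_x(f) - f](η)`. -/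
def eastGen (d : ℕ) (p : ℝ) (Λ : Finset (Site d)) (σb : Config d) :
    (FConfig Λ → ℝ) →ₗ[ℝ] (FConfig Λ → ℝ) where
  toFun f := fun η => ∑ x : ↥Λ,
    (if fconstraint Λ σb x η then (1 : ℝ) else 0) *
      (p * f (Function.update η x true) + (1 - p) * f (Function.update η x false) - f η)
  map_add' f g := by
    funext η
    simp only [Pi.add_apply]
    rw [← Finset.sum_add_distrib]
    refine Finset.sum_congr rfl fun x _ => ?_
    ring
  map_smul' c f := by
    funext η
    simp only [RingHom.id_apply, Pi.smul_apply, smul_eq_mul]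
    rw [Finset.mul_sum]
    refine Finset.sum_congr rfl fun x _ => ?_
    ring

/-- The generator as a continuous linear operator (the configuration space is
finite, hence the function space is finite dimensional). -/
def eastGenL (d : ℕ) (p : ℝ) (Λ : Finset (Site d)) (σb : Config d) :
    (FConfig Λ → ℝ) →L[ℝ] (FConfig Λ → ℝ) :=
  LinearMap.toContinuousLinearMap (eastGen d p Λ σb)

/-- The weight of a configuration under the product Bernoulli(`p`) measure `π`. -/
def piWeight (p : ℝ) {ι : Type*} [DecidableEq ι] [Fintype ι] (η : ι → Bool) : ℝ :=
  ∏ x, if η x then p else 1 - p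

/-- The mean `π(f)`. -/
def piMean (p : ℝ) {ι : Type*} [DecidableEq ι] [Fintype ι] (f : (ι → Bool) → ℝ) : ℝ :=
  ∑ η, piWeight p η * f η

/-- The variance `Var_π(f)`. -/
def piVar (p : ℝ) {ι : Type*} [DecidableEq ι] [Fintype ι] (f : (ι → Bool) → ℝ) : ℝ :=
  ∑ η, piWeight p η * (f η - piMean p f) ^ 2

/-- The norm of `L²(π)`. -/
def piNorm (p : ℝ) {ι : Type*} [DecidableEq ι] [Fintype ι] (f : (ι → Bool) → ℝ) : ℝ :=
  Real.sqrt (∑ η, piWeight p η * f η ^ 2)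

/-- The entropy `Ent_π(g) = π(g log g) - π(g) log π(g)`. -/
def piEnt (p : ℝ) {ι : Type*} [DecidableEq ι] [Fintype ι] (g : (ι → Bool) → ℝ) : ℝ :=
  (∑ η, piWeight p η * g η * Real.log (g η)) -
    (∑ η, piWeight p η * g η) * Real.log (∑ η, piWeight p η * g η)

/-- The Dirichlet form `⟨f, -A f⟩_π` of a generator `A`, w.r.t. `π`. -/
def dirichletForm (p : ℝ) {ι : Type*} [DecidableEq ι] [Fintype ι]
    (A : ((ι → Bool) → ℝ) →L[ℝ] ((ι → Bool) → ℝ)) (f : (ι → Bool) → ℝ) : ℝ :=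
  -(∑ η, piWeight p η * f η * A f η)

/-- The spectral gap of a (reversible) generator: the infimum over non-constant
`f` of the ratio of the Dirichlet form of `f` to its variance. -/
def specGap (p : ℝ) {ι : Type*} [DecidableEq ι] [Fintype ι]
    (A : ((ι → Bool) → ℝ) →L[ℝ] ((ι → Bool) → ℝ)) : ℝ :=
  sInf {r : ℝ | ∃ f, piVar p f ≠ 0 ∧ r = dirichletForm p A f / piVar p f}

/-- The logarithmic Sobolev constant: the infimum over non-constant `f` of the
ratio of the Dirichlet form of `f` to the entropy of `f²`. -/
def logSobolevConst (p : ℝ) {ι : Type*} [DecidableEq ι] [Fintype ι]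
    (A : ((ι → Bool) → ℝ) →L[ℝ] ((ι → Bool) → ℝ)) : ℝ :=
  sInf {r : ℝ | ∃ f, piEnt p (fun η => f η ^ 2) ≠ 0 ∧
    r = dirichletForm p A f / piEnt p (fun η => f η ^ 2)}

/-!
A generator `A` with `π(A g) = 0` preserves the mean, and along `v ↦ e^{vA} f` the squared norm
has derivative `-2 D(e^{vA} f)`. A Poincaré inequality `γ Var ≤ D` therefore gives
`‖e^{sA} f‖ ≤ e^{-γ s} ‖f‖` for mean-zero `f`. For the East generator, pairing each configuration
with its flip at `x` (on which `c_x` does not depend) writes `π(f 𝓛 g)` as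
`-p(1-p) Σ_x π(c_x ∇_x f ∇_x g)`; hence `D ≥ 0` and `π(𝓛 g) = 0`. On the intervals with
`σ_i(y) = 0` the spectral gap gives `γ = λ`, on the others `γ = 0`. Composing the contractions
and using `‖f‖_{L²(π)} ≤ ‖f‖_∞ ≤ 1` gives the bound.
-/

section ProductBernoulli

variable {ι : Type*} [DecidableEq ι] [Fintype ι] {p : ℝ}

lemma piWeight_nonneg (hp : 0 ≤ p) (hp1 : p ≤ 1) (η : ι → Bool) : 0 ≤ piWeight p η :=
  Finset.prod_nonneg fun x _ => by split <;> linarith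

lemma sum_piWeight (p : ℝ) : ∑ η : ι → Bool, piWeight p η = 1 := by
  simp only [piWeight]
  rw [← Fintype.prod_sum fun (_ : ι) (b : Bool) => if b then p else 1 - p]
  simp

lemma piWeight_update (p : ℝ) (η : ι → Bool) (x : ι) (b : Bool) :
    piWeight p (Function.update η x b) =
      (if b then p else 1 - p) * ∏ z ∈ Finset.univ.erase x, (if η z then p else 1 - p) := by
  rw [piWeight, ← Finset.mul_prod_erase _ _ (Finset.mem_univ x), Function.update_self]
  congr 1
  exact Finset.prod_congr rfl fun z hz => by rw [Function.update_of_ne (Finset.ne_of_mem_erase hz)]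

lemma piVar_eq_sub_sq (p : ℝ) (f : (ι → Bool) → ℝ) :
    piVar p f = ∑ η, piWeight p η * f η ^ 2 - piMean p f ^ 2 := by
  have hexpand : piVar p f = ∑ η, (piWeight p η * f η ^ 2
      - 2 * piMean p f * (piWeight p η * f η) + piMean p f ^ 2 * piWeight p η) :=
    Finset.sum_congr rfl fun η _ => by ring
  rw [hexpand, Finset.sum_add_distrib, Finset.sum_sub_distrib, ← Finset.mul_sum, ← Finset.mul_sum,
    sum_piWeight, show ∑ η, piWeight p η * f η = piMean p f from rfl]
  ring

lemma piVar_nonneg (hp : 0 ≤ p) (hp1 : p ≤ 1) (f : (ι → Bool) → ℝ) : 0 ≤ piVar p f :=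
  Finset.sum_nonneg fun η _ => mul_nonneg (piWeight_nonneg hp hp1 η) (sq_nonneg _)

lemma piNorm_le_one (hp : 0 ≤ p) (hp1 : p ≤ 1) {f : (ι → Bool) → ℝ} (hf : ∀ η, |f η| ≤ 1) :
    piNorm p f ≤ 1 := by
  rw [piNorm, Real.sqrt_le_one, ← sum_piWeight (ι := ι) p]
  refine Finset.sum_le_sum fun η _ => mul_le_of_le_one_right (piWeight_nonneg hp hp1 η) ?_
  exact sq_le_one_iff_abs_le_one _ |>.2 (hf η)

lemma sum_eq_zero_of_add_update_eq_zero {M : Type*} [AddCommMonoid M] {H : (ι → Bool) → M}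
    (x : ι) (hH : ∀ η, H (Function.update η x true) + H (Function.update η x false) = 0) :
    ∑ η, H η = 0 := by
  refine Finset.sum_ninvolution (fun η => Function.update η x (!η x)) (fun η => ?_)
    (fun η _ h => by simpa using congrFun h x) (fun _ => Finset.mem_univ _) (fun η => by simp)
  nth_rw 1 [← Function.update_eq_self x η]
  cases hb : η x
  · rw [add_comm]
    exact hH η
  · exact hH η

lemma sum_piWeight_mul_resample (p : ℝ) (x : ι) {c : (ι → Bool) → ℝ}
    (hc : ∀ η b, c (Function.update η x b) = c η) (f g : (ι → Bool) → ℝ) :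
    ∑ η, piWeight p η * f η *
        (c η * (p * g (Function.update η x true) + (1 - p) * g (Function.update η x false) - g η))
      = -(p * (1 - p)) * ∑ η, piWeight p η * c η *
        ((f (Function.update η x true) - f (Function.update η x false)) *
          (g (Function.update η x true) - g (Function.update η x false))) := by
  rw [← sub_eq_zero, Finset.mul_sum, ← Finset.sum_sub_distrib]
  refine sum_eq_zero_of_add_update_eq_zero x fun η => ?_
  simp only [Function.update_idem, hc, piWeight_update, if_true, Bool.false_eq_true, if_false]
  ring

end ProductBernoulli

lemma mul_piVar_le_dirichletForm_of_le_specGap {ι : Type*} [DecidableEq ι] [Fintype ι] {p : ℝ}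
    (hp : 0 ≤ p) (hp1 : p ≤ 1) {A : ((ι → Bool) → ℝ) →L[ℝ] ((ι → Bool) → ℝ)}
    (hA : ∀ g, 0 ≤ dirichletForm p A g) {lam : ℝ} (hlam : lam ≤ specGap p A)
    (g : (ι → Bool) → ℝ) : lam * piVar p g ≤ dirichletForm p A g := by
  rcases (piVar_nonneg hp hp1 g).eq_or_lt with hvar | hvar
  · rw [← hvar, mul_zero]
    exact hA g
  · rw [← le_div_iff₀ hvar]
    refine hlam.trans (csInf_le ⟨0, ?_⟩ ⟨g, hvar.ne', rfl⟩)
    rintro _ ⟨h, -, rfl⟩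
    exact div_nonneg (hA h) (piVar_nonneg hp hp1 h)

section EastGenerator

variable {d : ℕ} {p : ℝ} {Λ : Finset (Site d)} {σb : Config d}

lemma sub_basisVec_ne_self (x : Site d) (i : Fin d) : x - basisVec d i ≠ x := by
  simp [funext_iff, basisVec]

lemma fullConf_update_of_ne (η : FConfig Λ) (x : ↥Λ) (b : Bool) {z : Site d}
    (hz : z ≠ (x : Site d)) :
    fullConf Λ σb (Function.update η x b) z = fullConf Λ σb η z := by
  unfold fullConf
  split_ifs with hzΛ
  · exact Function.update_of_ne (fun h => hz (congrArg Subtype.val h)) _ _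
  · rfl

lemma fconstraint_update_self (η : FConfig Λ) (x : ↥Λ) (b : Bool) :
    fconstraint Λ σb x (Function.update η x b) ↔ fconstraint Λ σb x η :=
  exists_congr fun i => by rw [fullConf_update_of_ne η x b (sub_basisVec_ne_self _ i)]

open Classical in
lemma eastGen_apply (f : FConfig Λ → ℝ) (η : FConfig Λ) :
    eastGen d p Λ σb f η = ∑ x : ↥Λ,
      (if fconstraint Λ σb x η then (1 : ℝ) else 0) *
        (p * f (Function.update η x true) + (1 - p) * f (Function.update η x false) - f η) :=
  rfl

open Classical in
lemma sum_piWeight_mul_eastGen (f g : FConfig Λ → ℝ) :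
    ∑ η, piWeight p η * f η * eastGen d p Λ σb g η
      = -(p * (1 - p)) * ∑ x : ↥Λ, ∑ η, piWeight p η *
          (if fconstraint Λ σb x η then (1 : ℝ) else 0) *
          ((f (Function.update η x true) - f (Function.update η x false)) *
            (g (Function.update η x true) - g (Function.update η x false))) := by
  simp only [eastGen_apply, Finset.mul_sum]
  rw [Finset.sum_comm]
  refine Finset.sum_congr rfl fun x _ => ?_
  rw [sum_piWeight_mul_resample p x (fun η b => by rw [fconstraint_update_self]) f g,
    Finset.mul_sum]

lemma piMean_eastGenL (g : FConfig Λ → ℝ) : piMean p (eastGenL d p Λ σb g) = 0 := by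
  simpa [piMean, eastGenL] using sum_piWeight_mul_eastGen (p := p) (σb := σb) (fun _ => 1) g

lemma dirichletForm_eastGenL_nonneg (hp : 0 ≤ p) (hp1 : p ≤ 1) (f : FConfig Λ → ℝ) :
    0 ≤ dirichletForm p (eastGenL d p Λ σb) f := by
  rw [dirichletForm, eastGenL, LinearMap.coe_toContinuousLinearMap', sum_piWeight_mul_eastGen,
    neg_mul, neg_neg]
  refine mul_nonneg (mul_nonneg hp (sub_nonneg.2 hp1)) ?_
  refine Finset.sum_nonneg fun x _ => Finset.sum_nonneg fun η _ => ?_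
  refine mul_nonneg (mul_nonneg (piWeight_nonneg hp hp1 η) ?_) (mul_self_nonneg _)
  split_ifs <;> norm_num

end EastGenerator

section Semigroup

variable {ι : Type*} [DecidableEq ι] [Fintype ι] {p : ℝ}
  (A : ((ι → Bool) → ℝ) →L[ℝ] ((ι → Bool) → ℝ))

lemma hasDerivAt_exp_smul_apply (f : (ι → Bool) → ℝ) (u : ℝ) (η : ι → Bool) :
    HasDerivAt (fun v : ℝ => NormedSpace.exp (v • A) f η) (A (NormedSpace.exp (u • A) f) η) u :=
  hasDerivAt_pi.1 ((hasDerivAt_exp_smul_const' A u).clm_apply (hasDerivAt_const u f)) η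
    |>.congr_deriv (by simp)

lemma piMean_exp_smul_apply (hA : ∀ g, piMean p (A g) = 0) (f : (ι → Bool) → ℝ) (s : ℝ) :
    piMean p (NormedSpace.exp (s • A) f) = piMean p f := by
  have hderiv : ∀ u, HasDerivAt (fun v => piMean p (NormedSpace.exp (v • A) f)) 0 u := fun u =>
    (HasDerivAt.fun_sum fun η _ => (hasDerivAt_exp_smul_apply A f u η).const_mul _).congr_deriv
      (hA _)
  simpa using is_const_of_deriv_eq_zero (fun u => (hderiv u).differentiableAt)
    (fun u => (hderiv u).deriv) s 0

lemma hasDerivAt_sum_piWeight_mul_exp_smul_apply_sq (f : (ι → Bool) → ℝ) (u : ℝ) :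
    HasDerivAt (fun v => ∑ η, piWeight p η * NormedSpace.exp (v • A) f η ^ 2)
      (-(2 * dirichletForm p A (NormedSpace.exp (u • A) f))) u := by
  refine (HasDerivAt.fun_sum fun η _ =>
    ((hasDerivAt_exp_smul_apply A f u η).pow 2).const_mul _).congr_deriv ?_
  rw [dirichletForm, mul_neg, neg_neg, Finset.mul_sum]
  exact Finset.sum_congr rfl fun η _ => by push_cast; ring

lemma piNorm_exp_smul_apply_le {γ s : ℝ} (hA : ∀ g, piMean p (A g) = 0)
    (hD : ∀ g, γ * piVar p g ≤ dirichletForm p A g) (hs : 0 ≤ s) {f : (ι → Bool) → ℝ}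
    (hf : piMean p f = 0) :
    piNorm p (NormedSpace.exp (s • A) f) ≤ Real.exp (-(γ * s)) * piNorm p f := by
  set N : ℝ → ℝ := fun v => ∑ η, piWeight p η * NormedSpace.exp (v • A) f η ^ 2 with hN
  have hvar : ∀ u, piVar p (NormedSpace.exp (u • A) f) = N u := fun u => by
    rw [piVar_eq_sub_sq, piMean_exp_smul_apply A hA, hf]
    ring
  have hderiv : ∀ u, HasDerivAt (fun v => Real.exp (2 * γ * v) * N v)
      (Real.exp (2 * γ * u) * (2 * γ) * N u +
        Real.exp (2 * γ * u) * -(2 * dirichletForm p A (NormedSpace.exp (u • A) f))) u :=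
    fun u => (((hasDerivAt_id u).const_mul (2 * γ)).exp.congr_deriv (by simp)).mul
      (hasDerivAt_sum_piWeight_mul_exp_smul_apply_sq A f u)
  have hanti : Antitone fun v => Real.exp (2 * γ * v) * N v := by
    refine antitone_of_deriv_nonpos (fun u => (hderiv u).differentiableAt) fun u => ?_
    rw [(hderiv u).deriv]
    have := hD (NormedSpace.exp (u • A) f)
    rw [hvar] at this
    nlinarith [Real.exp_pos (2 * γ * u)]
  have hdecay : N s ≤ Real.exp (-(γ * s)) ^ 2 * N 0 := by
    have := hanti hs
    simp only [mul_zero, Real.exp_zero, one_mul] at this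
    calc N s = Real.exp (-(γ * s)) ^ 2 * (Real.exp (2 * γ * s) * N s) := by
          rw [← mul_assoc, ← Real.exp_nat_mul, ← Real.exp_add]
          ring_nf
          simp
      _ ≤ Real.exp (-(γ * s)) ^ 2 * N 0 := by gcongr
  calc piNorm p (NormedSpace.exp (s • A) f) = Real.sqrt (N s) := rfl
    _ ≤ Real.sqrt (Real.exp (-(γ * s)) ^ 2 * N 0) := Real.sqrt_le_sqrt hdecay
    _ = Real.exp (-(γ * s)) * piNorm p f := by
      rw [Real.sqrt_mul (sq_nonneg _), Real.sqrt_sq (Real.exp_pos _).le]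
      simp [hN, piNorm]

end Semigroup

section Composition

variable {ι α : Type*} [DecidableEq ι] [Fintype ι] {p : ℝ}
  (E : α → ((ι → Bool) → ℝ) →L[ℝ] ((ι → Bool) → ℝ))

lemma piMean_foldr_comp_apply {l : List α}
    (hmean : ∀ i ∈ l, ∀ g, piMean p (E i g) = piMean p g)
    (f : (ι → Bool) → ℝ) :
    piMean p (l.foldr (fun i B => (E i).comp B) (ContinuousLinearMap.id ℝ _) f) = piMean p f := by
  induction l with
  | nil => rfl
  | cons i l ih =>
    simp only [List.mem_cons, forall_eq_or_imp] at hmean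
    rw [List.foldr_cons, ContinuousLinearMap.comp_apply, hmean.1, ih hmean.2]

lemma piNorm_foldr_comp_apply_le {l : List α} {c : α → ℝ} (hc : ∀ i ∈ l, 0 ≤ c i)
    (hmean : ∀ i ∈ l, ∀ g, piMean p (E i g) = piMean p g)
    (hnorm : ∀ i ∈ l, ∀ g, piMean p g = 0 → piNorm p (E i g) ≤ c i * piNorm p g)
    {f : (ι → Bool) → ℝ} (hf : piMean p f = 0) :
    piNorm p (l.foldr (fun i B => (E i).comp B) (ContinuousLinearMap.id ℝ _) f) ≤
      (l.map c).prod * piNorm p f := by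
  induction l with
  | nil => simp
  | cons i l ih =>
    simp only [List.mem_cons, forall_eq_or_imp] at hc hmean hnorm
    rw [List.foldr_cons, ContinuousLinearMap.comp_apply, List.map_cons, List.prod_cons, mul_assoc]
    calc _ ≤ c i * piNorm p (l.foldr (fun i B => (E i).comp B) (ContinuousLinearMap.id ℝ _) f) :=
          hnorm.1 _ (by rw [piMean_foldr_comp_apply E hmean.2, hf])
      _ ≤ c i * ((l.map c).prod * piNorm p f) := by gcongr; exacts [hc.1, ih hc.2 hmean.2 hnorm.2]

end Composition

theorem east_semigroup_contraction_general
    (d : ℕ) (p : ℝ) (hp : 0 < p) (hp1 : p < 1)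
    (Λ : Finset (Site d))
    (y : Site d)
    (n : ℕ) (τ : ℕ → ℝ)
    (hτmono : ∀ i ≤ n, τ i < τ (i + 1))
    (σ : ℕ → Config d)
    (lam : ℝ)
    (hgap : ∀ i ≤ n, σ i y = false → lam ≤ specGap p (eastGenL d p Λ (σ i)))
    (f : FConfig Λ → ℝ) (hmean : piMean p f = 0) (hbdd : ∀ η, |f η| ≤ 1) :
    piNorm p
      (((List.range (n + 1)).foldr
          (fun i A =>
            (NormedSpace.exp ((τ (i + 1) - τ i) • eastGenL d p Λ (σ i))).comp A)
          (ContinuousLinearMap.id ℝ (FConfig Λ → ℝ))) f)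
      ≤ Real.exp (-(lam * ∑ i ∈ Finset.range (n + 1),
          (τ (i + 1) - τ i) * (if σ i y = false then 1 else 0))) := by
  set γ : ℕ → ℝ := fun i => lam * if σ i y = false then 1 else 0
  have hD : ∀ i ≤ n, ∀ g, γ i * piVar p g ≤ dirichletForm p (eastGenL d p Λ (σ i)) g := by
    intro i hi g
    have hnonneg := dirichletForm_eastGenL_nonneg (Λ := Λ) (σb := σ i) hp.le hp1.le
    by_cases hσ : σ i y = false
    · simpa [γ, hσ] using mul_piVar_le_dirichletForm_of_le_specGap hp.le hp1.le hnonneg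
        (hgap i hi hσ) g
    · simpa [γ, hσ] using hnonneg g
  have hcontract : ∀ i ∈ List.range (n + 1), ∀ g, piMean p g = 0 →
      piNorm p (NormedSpace.exp ((τ (i + 1) - τ i) • eastGenL d p Λ (σ i)) g) ≤
        Real.exp (-(γ i * (τ (i + 1) - τ i))) * piNorm p g := fun i hi _ hg =>
    have hi : i ≤ n := Nat.lt_succ_iff.mp (List.mem_range.mp hi)
    piNorm_exp_smul_apply_le _ piMean_eastGenL (hD i hi) (sub_nonneg.2 (hτmono i hi).le) hg
  calc _ ≤ ((List.range (n + 1)).map fun i => Real.exp (-(γ i * (τ (i + 1) - τ i)))).prod *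
          piNorm p f :=
        piNorm_foldr_comp_apply_le _ (fun _ _ => (Real.exp_pos _).le)
          (fun _ _ g => piMean_exp_smul_apply _ piMean_eastGenL g _) hcontract hmean
    _ ≤ ((List.range (n + 1)).map fun i => Real.exp (-(γ i * (τ (i + 1) - τ i)))).prod :=
        mul_le_of_le_one_right (List.prod_nonneg (by simp [Real.exp_nonneg]))
          (piNorm_le_one hp.le hp1.le hbdd)
    _ = _ := by
      rw [← List.prod_toFinset _ List.nodup_range, List.toFinset_range, ← Real.exp_sum,
        Finset.mul_sum, ← Finset.sum_neg_distrib]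
      exact congrArg Real.exp (Finset.sum_congr rfl fun i _ => by ring)

/-- **Equation (4.4) in the proof of Theorem 4.3.**  Let `Λ` be a finite box and
`0 = t_0 < t_1 < ⋯ < t_n < t_{n+1} = t`.  For `i = 0, …, n` let `𝓛^{(i)}` be the
generator of the East-like process on `Λ` with boundary condition `σ i`
(self-adjoint in `L²(Λ,π)`), and let `λ > 0` be such that whenever the boundary
spin at the fixed vertex `y ∈ ∂_E Λ` is `0`, the spectral gap of `𝓛^{(i)}` is at
least `λ`.  Then for every `f` with `π(f) = 0` and `‖f‖_∞ ≤ 1`,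
`‖e^{t₁𝓛^{(0)}} e^{(t₂-t₁)𝓛^{(1)}} ⋯ e^{(t-t_n)𝓛^{(n)}} f‖_π
  ≤ exp(-λ Σ_{i=0}^n (t_{i+1}-t_i) 1(σ_i(y) = 0))`. -/
theorem east_semigroup_contraction
    (d : ℕ) (hd : 0 < d) (p : ℝ) (hp : 0 < p) (hp1 : p < 1)
    (Λ : Finset (Site d)) (a b : Site d)
    (hbox : Λ = Fintype.piFinset fun i => Finset.Icc (a i) (b i))
    (y : Site d) (hy : y ∈ eastBdry (↑Λ : Set (Site d)))
    (n : ℕ) (t : ℝ) (τ : ℕ → ℝ)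
    (hτ0 : τ 0 = 0) (hτlast : τ (n + 1) = t)
    (hτmono : ∀ i ≤ n, τ i < τ (i + 1))
    (σ : ℕ → Config d)
    (lam : ℝ) (hlam : 0 < lam)
    (hgap : ∀ i ≤ n, σ i y = false → lam ≤ specGap p (eastGenL d p Λ (σ i)))
    (f : FConfig Λ → ℝ) (hmean : piMean p f = 0) (hbdd : ∀ η, |f η| ≤ 1) :
    piNorm p
      (((List.range (n + 1)).foldr
          (fun i A =>
            (NormedSpace.exp ((τ (i + 1) - τ i) • eastGenL d p Λ (σ i))).comp A)
          (ContinuousLinearMap.id ℝ (FConfig Λ → ℝ))) f)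
      ≤ Real.exp (-(lam * ∑ i ∈ Finset.range (n + 1),
          (τ (i + 1) - τ i) * (if σ i y = false then 1 else 0))) :=
  east_semigroup_contraction_general d p hp hp1 Λ y n τ hτmono σ lam hgap f hmean hbdd

end
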